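/- Fix an integer d ≥ 1 and an integer j ≥ 3. For sequences α(N) > 0 and μ_1(N), ..., μ_j(N) > 0 indexed by N ∈ ℕ, if limsup_{N→∞} μ_{j-1}/μ_j < ∞ and μ_j·α^d·β_{j-1}^{d+1} → 0 as N → ∞, then μ_{j-1}·α^d·β_{j-2}^{d+1} → 0 as N → ∞, where β_m := (N·α^{(m-1)d}·∏_{i=1}^{m} μ_i)^{-1/((m-1)d+m)}. (Claim used in the paper to derive the alternative description (10) of the index l.) -/

import Mathlib

open Filter

/-- `beta d α μ m N` is the quantity
`β_m = (N · α^{(m-1)d} · ∏_{i=1}^{m} μ_i)^{-1/((m-1)d+m)}` from the paper,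
where all quantities depend on `N` and the power is a real power. -/
noncomputable def beta (d : ℕ) (α : ℕ → ℝ) (μ : ℕ → ℕ → ℝ) (m N : ℕ) : ℝ :=
  ((N : ℝ) * α N ^ ((m - 1) * d) * ∏ i ∈ Finset.Icc 1 m, μ i N) ^
    (-(1 / (((m - 1) * d + m : ℕ) : ℝ)))

/-! Write `j = m + 2`, `Q` for the base of `β_m`, `e` for its exponent and `M = μ_{m+1} α^d`.
Then `β_m = Q^{-1/e}` and `β_{m+1} = (QM)^{-1/(e+d+1)}`, so
`(M β_{m+1}^{d+1})^{(e+d+1)/e} = M β_m^{d+1}` exactly. Since `μ_{m+1}/μ_{m+2}` is bounded, the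
hypothesis gives `M β_{m+1}^{d+1} → 0`, and a fixed positive power preserves convergence to `0`. -/

namespace Real

lemma mul_rpow_neg_inv_add_pow_rpow {M Q a : ℝ} (hM : 0 < M) (hQ : 0 < Q) (ha : 0 < a) (n : ℕ) :
    (M * ((Q * M) ^ (-(1 / (a + n)))) ^ n) ^ ((a + n) / a) = M * (Q ^ (-(1 / a))) ^ n := by
  have hb : 0 < a + n := by positivity
  have hL : 0 < M * ((Q * M) ^ (-(1 / (a + n)))) ^ n := by positivity
  rw [← exp_log (rpow_pos_of_pos hL _), ← exp_log (by positivity : 0 < M * (Q ^ (-(1 / a))) ^ n)]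
  congr 1
  rw [log_rpow hL, log_mul hM.ne' (by positivity), log_mul hM.ne' (by positivity), log_pow,
    log_pow, log_rpow hQ, log_rpow (mul_pos hQ hM), log_mul hQ.ne' hM.ne']
  field_simp
  ring

end Real

section Beta

variable (d : ℕ) (α : ℕ → ℝ) (μ : ℕ → ℕ → ℝ)

def betaBase (m N : ℕ) : ℝ :=
  (N : ℝ) * α N ^ ((m - 1) * d) * ∏ i ∈ Finset.Icc 1 m, μ i N

def betaExponent (m : ℕ) : ℕ := (m - 1) * d + m

variable {d α μ}

lemma beta_eq_betaBase_rpow (m N : ℕ) :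
    beta d α μ m N = betaBase d α μ m N ^ (-(1 / (betaExponent d m : ℝ))) := rfl

lemma betaExponent_pos {m : ℕ} (hm : 1 ≤ m) : 0 < betaExponent d m := by
  unfold betaExponent; omega

lemma betaExponent_succ {m : ℕ} (hm : 1 ≤ m) :
    betaExponent d (m + 1) = betaExponent d m + (d + 1) := by
  obtain ⟨k, rfl⟩ := Nat.exists_eq_add_of_le' hm
  simp only [betaExponent, Nat.add_sub_cancel]
  ring

lemma betaBase_succ {m : ℕ} (hm : 1 ≤ m) (N : ℕ) :
    betaBase d α μ (m + 1) N = betaBase d α μ m N * (μ (m + 1) N * α N ^ d) := by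
  obtain ⟨k, rfl⟩ := Nat.exists_eq_add_of_le' hm
  simp only [betaBase, Nat.add_sub_cancel, Finset.prod_Icc_succ_top (by omega : 1 ≤ k + 1 + 1),
    add_mul, one_mul, pow_add]
  ring

lemma betaBase_pos {m N : ℕ} (hN : 0 < N) (hα : 0 < α N) (hμ : ∀ i ∈ Finset.Icc 1 m, 0 < μ i N) :
    0 < betaBase d α μ m N := by
  have := Finset.prod_pos hμ
  unfold betaBase
  positivity

lemma mul_beta_succ_pow_rpow {m N : ℕ} (hm : 1 ≤ m) (hN : 0 < N) (hα : 0 < α N)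
    (hμ : ∀ i ∈ Finset.Icc 1 (m + 1), 0 < μ i N) :
    (μ (m + 1) N * α N ^ d * beta d α μ (m + 1) N ^ (d + 1)) ^
        ((betaExponent d (m + 1) : ℝ) / betaExponent d m) =
      μ (m + 1) N * α N ^ d * beta d α μ m N ^ (d + 1) := by
  have hQ : 0 < betaBase d α μ m N := betaBase_pos hN hα fun i hi =>
    hμ i (Finset.Icc_subset_Icc_right m.le_succ hi)
  have hM : 0 < μ (m + 1) N * α N ^ d :=
    mul_pos (hμ _ (Finset.right_mem_Icc.mpr (by omega))) (pow_pos hα d)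
  have h := Real.mul_rpow_neg_inv_add_pow_rpow hM hQ
    (Nat.cast_pos.mpr (betaExponent_pos (d := d) hm)) (d + 1)
  rw [beta_eq_betaBase_rpow, beta_eq_betaBase_rpow, betaBase_succ hm, betaExponent_succ hm]
  push_cast at h ⊢
  exact h

end Beta

theorem stmt1_general (d j : ℕ) (hj : 3 ≤ j)
    (α : ℕ → ℝ) (μ : ℕ → ℕ → ℝ)
    (hα : ∀ N, 0 < α N) (hμ : ∀ i, 1 ≤ i → i ≤ j → ∀ N, 0 < μ i N)
    (hbdd : IsBoundedUnder (· ≤ ·) atTop (fun N => μ (j - 1) N / μ j N))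
    (h : Tendsto (fun N => μ j N * α N ^ d * beta d α μ (j - 1) N ^ (d + 1)) atTop (nhds 0)) :
    Tendsto (fun N => μ (j - 1) N * α N ^ d * beta d α μ (j - 2) N ^ (d + 1)) atTop (nhds 0) := by
  obtain ⟨m, rfl⟩ : ∃ m, j = m + 2 := ⟨j - 2, by omega⟩
  have hm : 1 ≤ m := by omega
  have hμ_pos : ∀ N, ∀ i ∈ Finset.Icc 1 (m + 2), 0 < μ i N := fun N i hi =>
    hμ i (Finset.mem_Icc.mp hi).1 (Finset.mem_Icc.mp hi).2 N
  simp only [Nat.add_sub_cancel, show m + 2 - 1 = m + 1 by omega] at hbdd h ⊢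
  have hbdd_norm : IsBoundedUnder (· ≤ ·) atTop (norm ∘ fun N => μ (m + 1) N / μ (m + 2) N) :=
    hbdd.mono_le (Eventually.of_forall fun N => (Real.norm_of_nonneg (div_pos
      (hμ_pos N _ (by simp)) (hμ_pos N _ (by simp))).le).le)
  have hlim : Tendsto (fun N => μ (m + 1) N * α N ^ d * beta d α μ (m + 1) N ^ (d + 1))
      atTop (nhds 0) := by
    refine (isBoundedUnder_le_mul_tendsto_zero hbdd_norm h).congr fun N => ?_
    field_simp [(hμ_pos N (m + 2) (by simp)).ne']
  have hexp : (0 : ℝ) < betaExponent d (m + 1) / betaExponent d m := by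
    have := betaExponent_pos (d := d) hm
    have := betaExponent_pos (d := d) (m := m + 1) (by omega)
    positivity
  have hpow := hlim.rpow_const (p := betaExponent d (m + 1) / betaExponent d m) (Or.inr hexp.le)
  rw [Real.zero_rpow hexp.ne'] at hpow
  refine hpow.congr' ?_
  filter_upwards [eventually_gt_atTop 0] with N hN
  exact mul_beta_succ_pow_rpow hm hN (hα N) fun i hi =>
    hμ_pos N i (Finset.Icc_subset_Icc_right (by omega) hi)

/-- If `j ≥ 3`, `μ_{j-1} ≲ μ_j` and `μ_j·α^d·β_{j-1}^{d+1} → 0`,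
then `μ_{j-1}·α^d·β_{j-2}^{d+1} → 0`. -/
theorem stmt1 (d j : ℕ) (hd : 1 ≤ d) (hj : 3 ≤ j)
    (α : ℕ → ℝ) (μ : ℕ → ℕ → ℝ)
    (hα : ∀ N, 0 < α N) (hμ : ∀ i, 1 ≤ i → i ≤ j → ∀ N, 0 < μ i N)
    (hbdd : IsBoundedUnder (· ≤ ·) atTop (fun N => μ (j - 1) N / μ j N))
    (h : Tendsto (fun N => μ j N * α N ^ d * beta d α μ (j - 1) N ^ (d + 1)) atTop (nhds 0)) :
    Tendsto (fun N => μ (j - 1) N * α N ^ d * beta d α μ (j - 2) N ^ (d + 1)) atTop (nhds 0) :=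
  stmt1_general d j hj α μ hα hμ hbdd h
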